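/- arXiv:2003.02915 — 2 statements merged into one kernel-verified Lean document; each statement's English description precedes it below -/
import Mathlib

section
/- For n ≥ 3, the set partitions of [n] with exactly k blocks avoiding both 1/23 and 13/2 are exactly those whose RGF is 1^{n-k+1} 2 3 ⋯ k; in particular there is exactly one such partition for each 1 ≤ k ≤ n. -/
open Finset Polynomial

/-- Set partitions of `[n] = {1, …, n}`, modeled as finpartitions of `Fin n`. -/
abbrev SP (n : ℕ) := Finpartition (Finset.univ : Finset (Fin n))

noncomputable instance (n : ℕ) : Fintype (SP n) :=
  Fintype.ofInjective Finpartition.parts fun _ _ h => Finpartition.ext h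

/-- `i` and `j` lie in the same block of the set partition `P`. -/
def inSameBlock {n : ℕ} (P : SP n) (i j : Fin n) : Prop :=
  ∃ B ∈ P.parts, i ∈ B ∧ j ∈ B

/-- `P` avoids the pattern `1/2/3`: no three elements lie in three pairwise distinct blocks. -/
def avoids1_2_3 {n : ℕ} (P : SP n) : Prop :=
  ¬ ∃ a b c : Fin n, a < b ∧ b < c ∧
    ¬ inSameBlock P a b ∧ ¬ inSameBlock P b c ∧ ¬ inSameBlock P a c

/-- `P` avoids the pattern `13/2`. -/
def avoids13_2 {n : ℕ} (P : SP n) : Prop :=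
  ¬ ∃ a b c : Fin n, a < b ∧ b < c ∧ inSameBlock P a c ∧ ¬ inSameBlock P a b

/-- `P` avoids the pattern `1/23`. -/
def avoids1_23 {n : ℕ} (P : SP n) : Prop :=
  ¬ ∃ a b c : Fin n, a < b ∧ b < c ∧ inSameBlock P b c ∧ ¬ inSameBlock P a b

/-- `P` avoids the pattern `12/3`. -/
def avoids12_3 {n : ℕ} (P : SP n) : Prop :=
  ¬ ∃ a b c : Fin n, a < b ∧ b < c ∧ inSameBlock P a b ∧ ¬ inSameBlock P a c

/-- `P` avoids the pattern `123`: every block has at most two elements. -/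
def avoids123 {n : ℕ} (P : SP n) : Prop :=
  ∀ B ∈ P.parts, B.card ≤ 2

/-- The block of `P` containing `i`. -/
def blockOf {n : ℕ} (P : SP n) (i : Fin n) : Finset (Fin n) :=
  (P.parts.filter (fun B => i ∈ B)).sup id

/-- The restricted growth function of `P`: the letter at position `i` is the index
(starting from 1) of the block containing `i`, blocks being ordered by increasing minima. -/
def rgf {n : ℕ} (P : SP n) (i : Fin n) : ℕ :=
  (P.parts.filter (fun B => B.min ≤ (blockOf P i).min)).card

/-- The left-bigger statistic of Wachs and White. -/
def lbStat {n : ℕ} (w : Fin n → ℕ) : ℕ :=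
  ∑ j : Fin n, (((Finset.univ.filter (fun i => i < j)).image w).filter (fun v => w j < v)).card

/-- The left-smaller statistic of Wachs and White. -/
def lsStat {n : ℕ} (w : Fin n → ℕ) : ℕ :=
  ∑ j : Fin n, (((Finset.univ.filter (fun i => i < j)).image w).filter (fun v => v < w j)).card

/-- The right-bigger statistic of Wachs and White. -/
def rbStat {n : ℕ} (w : Fin n → ℕ) : ℕ :=
  ∑ j : Fin n, (((Finset.univ.filter (fun i => j < i)).image w).filter (fun v => w j < v)).card

/-- The right-smaller statistic of Wachs and White. -/
def rsStat {n : ℕ} (w : Fin n → ℕ) : ℕ :=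
  ∑ j : Fin n, (((Finset.univ.filter (fun i => j < i)).image w).filter (fun v => v < w j)).card

open Classical in
/-- The generating function `∑ q^{stat(π)}` over `k`-block partitions of `[n]` avoiding
a given family of patterns (described by the avoidance predicate `avoid`). -/
noncomputable def genPoly (n k : ℕ) (avoid : SP n → Prop) (stat : (Fin n → ℕ) → ℕ) :
    Polynomial ℕ :=
  ∑ P ∈ Finset.univ.filter (fun P : SP n => P.parts.card = k ∧ avoid P),
    Polynomial.X ^ (stat (rgf P))

/-! Avoiding `1/23` and `13/2` forces every block containing two elements `b < c` to contain all of
`{0, …, c}`. Hence the only block that can have more than one element is the block of `0`, which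
is an initial segment `{0, …, m}`, and the partition has `n - m` blocks; so `m = n - k`. Blocks
are ordered by their minima, so the RGF of this partition is `1^{m+1} 2 3 ⋯ (n - m)`. -/

section Blocks

variable {n : ℕ} (P : SP n)

lemma inSameBlock_iff_part_eq {i j : Fin n} : inSameBlock P i j ↔ P.part i = P.part j := by
  rw [inSameBlock, ← Finpartition.mem_part_iff_exists,
    P.mem_part_iff_part_eq_part (mem_univ i) (mem_univ j)]

lemma blockOf_eq_part (i : Fin n) : blockOf P i = P.part i := by
  have hfilter : P.parts.filter (i ∈ ·) = {P.part i} := by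
    ext B
    simp only [mem_filter, mem_singleton]
    exact ⟨fun ⟨hB, hiB⟩ => (P.part_eq_of_mem hB hiB).symm, by rintro rfl; simp⟩
  rw [blockOf, hfilter, sup_singleton, id]

lemma mem_parts_iff_exists_part_eq {B : Finset (Fin n)} : B ∈ P.parts ↔ ∃ i, P.part i = B := by
  refine ⟨fun hB => ?_, by rintro ⟨i, rfl⟩; simp⟩
  obtain ⟨i, hi⟩ := P.nonempty_of_mem_parts hB
  exact ⟨i, P.part_eq_of_mem hB hi⟩

lemma eq_of_inSameBlock_iff {Q : SP n} (h : ∀ i j, inSameBlock P i j ↔ inSameBlock Q i j) :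
    P = Q := by
  have hpart : ∀ i, P.part i = Q.part i := fun i => by
    ext j
    rw [Finpartition.mem_part_iff_exists, Finpartition.mem_part_iff_exists]
    exact h j i
  ext B
  simp only [mem_parts_iff_exists_part_eq, hpart]

variable {P}

lemma eq_of_min_eq {B C : Finset (Fin n)} (hB : B ∈ P.parts) (hC : C ∈ P.parts)
    (h : B.min = C.min) : B = C := by
  have hBne := P.nonempty_of_mem_parts hB
  have hmin : C.min = B.min' hBne := h ▸ (coe_min' hBne).symm
  exact P.eq_of_mem_parts hB hC (B.min'_mem hBne) (mem_of_min hmin)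

lemma card_filter_min_le_lt {C : Finset (Fin n)} {x : WithTop (Fin n)} (hC : C ∈ P.parts)
    (h : x < C.min) :
    #(P.parts.filter (·.min ≤ x)) < #(P.parts.filter (·.min ≤ C.min)) := by
  refine card_lt_card ⟨monotone_filter_right _ fun _ _ hB => hB.trans h.le, fun hsub => ?_⟩
  exact not_le.2 h (mem_filter.1 (hsub (mem_filter.2 ⟨hC, le_rfl⟩))).2

lemma rgf_eq_rgf_iff {i j : Fin n} : rgf P i = rgf P j ↔ inSameBlock P i j := by
  simp only [rgf, blockOf_eq_part, inSameBlock_iff_part_eq]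
  refine ⟨fun h => ?_, fun h => by rw [h]⟩
  have hi : P.part i ∈ P.parts := P.part_mem.2 (mem_univ i)
  have hj : P.part j ∈ P.parts := P.part_mem.2 (mem_univ j)
  rcases lt_trichotomy (P.part i).min (P.part j).min with hlt | heq | hgt
  · exact absurd h (card_filter_min_le_lt hj hlt).ne
  · exact eq_of_min_eq hi hj heq
  · exact absurd h.symm (card_filter_min_le_lt hi hgt).ne

lemma rgf_injective : Function.Injective (rgf (n := n)) := fun P Q h =>
  eq_of_inSameBlock_iff P fun i j => by rw [← rgf_eq_rgf_iff, ← rgf_eq_rgf_iff, h]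

end Blocks

section InitialSegment

variable {n : ℕ} (m : Fin n)

def iicSetoid : Setoid (Fin n) where
  r i j := (i ≤ m ∧ j ≤ m) ∨ i = j
  iseqv := {
    refl := fun _ => Or.inr rfl
    symm := by rintro i j (h | rfl) <;> simp_all
    trans := by rintro i j k (h | rfl) (h' | rfl) <;> simp_all }

instance : DecidableRel (iicSetoid m).r := fun i j =>
  inferInstanceAs (Decidable ((i ≤ m ∧ j ≤ m) ∨ i = j))

noncomputable def iicPartition : SP n := Finpartition.ofSetoid (iicSetoid m)

variable {m} {i j : Fin n}

lemma mem_part_iicPartition : j ∈ (iicPartition m).part i ↔ (i ≤ m ∧ j ≤ m) ∨ i = j :=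
  Finpartition.mem_part_ofSetoid_iff_rel

lemma inSameBlock_iicPartition : inSameBlock (iicPartition m) i j ↔ (i ≤ m ∧ j ≤ m) ∨ i = j := by
  rw [inSameBlock, ← Finpartition.mem_part_iff_exists, mem_part_iicPartition]
  tauto

lemma part_iicPartition_of_le (h : i ≤ m) : (iicPartition m).part i = Iic m := by
  ext j
  rw [mem_part_iicPartition, mem_Iic]
  constructor
  · rintro (⟨-, hj⟩ | rfl)
    exacts [hj, h]
  · exact fun hj => Or.inl ⟨h, hj⟩

lemma part_iicPartition_of_lt (h : m < i) : (iicPartition m).part i = {i} := by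
  ext j
  rw [mem_part_iicPartition, mem_singleton]
  constructor
  · rintro (⟨hi, -⟩ | rfl)
    exacts [absurd hi (not_le.2 h), rfl]
  · rintro rfl
    exact Or.inr rfl

lemma parts_iicPartition :
    (iicPartition m).parts = insert (Iic m) ((Ioi m).image ({·})) := by
  ext B
  simp only [mem_parts_iff_exists_part_eq, mem_insert, mem_image, mem_Ioi]
  constructor
  · rintro ⟨i, rfl⟩
    rcases le_or_gt i m with h | h
    · exact Or.inl (part_iicPartition_of_le h)
    · exact Or.inr ⟨i, h, (part_iicPartition_of_lt h).symm⟩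
  · rintro (rfl | ⟨i, h, rfl⟩)
    exacts [⟨m, part_iicPartition_of_le le_rfl⟩, ⟨i, part_iicPartition_of_lt h⟩]

lemma Iic_notMem_image_singleton_Ioi : Iic m ∉ (Ioi m).image ({·}) := by
  simp only [mem_image, mem_Ioi, not_exists, not_and]
  intro i hi hEq
  have hm : m ∈ ({i} : Finset (Fin n)) := hEq ▸ mem_Iic.2 le_rfl
  exact hi.ne (mem_singleton.1 hm)

lemma card_parts_iicPartition : #(iicPartition m).parts = n - m := by
  rw [parts_iicPartition, card_insert_of_notMem Iic_notMem_image_singleton_Ioi,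
    card_image_of_injective _ fun _ _ => singleton_inj.1, Fin.card_Ioi]
  omega

lemma card_filter_parts_iicPartition_min_le (x : Fin n) :
    #((iicPartition m).parts.filter (·.min ≤ (x : WithTop (Fin n)))) = (x : ℕ) - m + 1 := by
  have hIic : (Iic m).min ≤ x :=
    (min_le (mem_Iic.2 (min_le_right x m))).trans (WithTop.coe_le_coe.2 (min_le_left x m))
  have hIoc : (Ioi m).filter (fun j => ({j} : Finset (Fin n)).min ≤ x) = Ioc m x := by
    ext j
    simp [and_comm]
  have hnotMem : Iic m ∉ (Ioc m x).image ({·}) := fun hmem =>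
    Iic_notMem_image_singleton_Ioi (image_subset_image Ioc_subset_Ioi_self hmem)
  rw [parts_iicPartition, filter_insert, if_pos hIic, filter_image, hIoc,
    card_insert_of_notMem hnotMem, card_image_of_injective _ fun _ _ => singleton_inj.1,
    Fin.card_Ioc]

lemma rgf_iicPartition (i : Fin n) :
    rgf (iicPartition m) i = if (i : ℕ) ≤ m then 1 else (i : ℕ) - m + 1 := by
  rw [rgf, blockOf_eq_part]
  split_ifs with h
  · let z : Fin n := ⟨0, m.pos⟩
    have hmin : (Iic m).min = z :=
      le_antisymm (min_le (mem_Iic.2 (Nat.zero_le _)))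
        (Finset.le_min fun _ _ => WithTop.coe_le_coe.2 (Nat.zero_le _))
    rw [part_iicPartition_of_le h, hmin, card_filter_parts_iicPartition_min_le]
    simp [z]
  · rw [part_iicPartition_of_lt (not_le.1 h), min_singleton,
      card_filter_parts_iicPartition_min_le]

lemma avoids1_23_iicPartition : avoids1_23 (iicPartition m) := by
  rintro ⟨a, b, c, hab, hbc, hbc', hab'⟩
  rw [inSameBlock_iicPartition] at hbc' hab'
  rcases hbc' with ⟨hb, -⟩ | rfl
  · exact hab' (Or.inl ⟨hab.le.trans hb, hb⟩)
  · exact lt_irrefl _ hbc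

lemma avoids13_2_iicPartition : avoids13_2 (iicPartition m) := by
  rintro ⟨a, b, c, hab, hbc, hac', hab'⟩
  rw [inSameBlock_iicPartition] at hac' hab'
  rcases hac' with ⟨ha, hc⟩ | rfl
  · exact hab' (Or.inl ⟨ha, hbc.le.trans hc⟩)
  · exact lt_asymm hab hbc

end InitialSegment

section Avoidance

variable {n : ℕ} {P : SP n}

lemma part_eq_of_le_of_part_eq (h1 : avoids1_23 P) (h2 : avoids13_2 P) {a b c : Fin n}
    (hbc : b < c) (h : P.part b = P.part c) (hac : a ≤ c) : P.part a = P.part c := by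
  simp only [avoids1_23, avoids13_2, inSameBlock_iff_part_eq, not_exists, not_and, not_not]
    at h1 h2
  rcases lt_trichotomy a b with hab | rfl | hba
  · exact (h1 a b c hab hbc h).trans h
  · exact h
  · rcases hac.lt_or_eq with hac | rfl
    · exact (h2 b a c hba hac h).symm.trans h
    · rfl

lemma exists_eq_iicPartition [NeZero n] (h1 : avoids1_23 P) (h2 : avoids13_2 P) :
    ∃ m, P = iicPartition m := by
  set m := (P.part 0).max' (P.part_nonempty.2 (mem_univ 0))
  have mem_part_zero_iff {i : Fin n} : i ∈ P.part 0 ↔ P.part i = P.part 0 :=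
    P.mem_part_iff_part_eq_part (mem_univ i) (mem_univ 0)
  have le_of_part_eq {i j : Fin n} (hij : i < j) (h : P.part i = P.part j) : i ≤ m ∧ j ≤ m := by
    have hj : P.part j = P.part 0 := (part_eq_of_le_of_part_eq h1 h2 hij h (Fin.zero_le j)).symm
    exact ⟨le_max' _ _ (mem_part_zero_iff.2 (h.trans hj)), le_max' _ _ (mem_part_zero_iff.2 hj)⟩
  refine ⟨m, eq_of_inSameBlock_iff P fun i j => ?_⟩
  rw [inSameBlock_iicPartition, inSameBlock_iff_part_eq]
  constructor
  · intro h
    rcases lt_trichotomy i j with hij | rfl | hji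
    exacts [Or.inl (le_of_part_eq hij h), Or.inr rfl, Or.inl (le_of_part_eq hji h.symm).symm]
  · rintro (⟨hi, hj⟩ | rfl)
    · have hm : P.part m = P.part 0 := mem_part_zero_iff.1 (max'_mem _ _)
      rcases (Fin.zero_le m).lt_or_eq with hpos | hzero
      · rw [part_eq_of_le_of_part_eq h1 h2 hpos hm.symm hi,
          part_eq_of_le_of_part_eq h1 h2 hpos hm.symm hj]
      · rw [← hzero, nonpos_iff_eq_zero] at hi hj
        rw [hi, hj]
    · rfl

end Avoidance

theorem stmt7_general (n k : ℕ) (hk1 : 1 ≤ k) (hkn : k ≤ n) :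
    (∀ P : SP n, (P.parts.card = k ∧ avoids1_23 P ∧ avoids13_2 P) ↔
      ∀ i : Fin n, rgf P i = if (i : ℕ) ≤ n - k then 1 else (i : ℕ) - (n - k) + 1) ∧
    Nat.card {P : SP n // P.parts.card = k ∧ avoids1_23 P ∧ avoids13_2 P} = 1 := by
  have hm : n - k < n := by omega
  set Q := iicPartition (⟨n - k, hm⟩ : Fin n)
  have avoiding_iff : ∀ P : SP n, (P.parts.card = k ∧ avoids1_23 P ∧ avoids13_2 P) ↔ P = Q := by
    intro P
    constructor
    · rintro ⟨hk, h1, h2⟩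
      have : NeZero n := ⟨by omega⟩
      obtain ⟨m, rfl⟩ := exists_eq_iicPartition h1 h2
      rw [card_parts_iicPartition] at hk
      exact congrArg iicPartition (Fin.ext (by dsimp only; omega))
    · rintro rfl
      refine ⟨?_, avoids1_23_iicPartition, avoids13_2_iicPartition⟩
      rw [card_parts_iicPartition, Fin.val_mk]
      omega
  have rgf_iff : ∀ P : SP n,
      (∀ i : Fin n, rgf P i = if (i : ℕ) ≤ n - k then 1 else (i : ℕ) - (n - k) + 1) ↔ P = Q := by
    intro P
    rw [← rgf_injective.eq_iff, funext_iff]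
    simp only [Q, rgf_iicPartition]
  refine ⟨fun P => (avoiding_iff P).trans (rgf_iff P).symm, ?_⟩
  simp_rw [avoiding_iff]
  exact Nat.card_unique

/-- For `n ≥ 3` and `1 ≤ k ≤ n`, the `k`-block set partitions of `[n]`
avoiding both `1/23` and `13/2` are exactly those whose RGF is `1^{n-k+1} 2 3 ⋯ k`;
in particular there is exactly one such partition. -/
theorem stmt7 (n k : ℕ) (hn : 3 ≤ n) (hk1 : 1 ≤ k) (hkn : k ≤ n) :
    (∀ P : SP n, (P.parts.card = k ∧ avoids1_23 P ∧ avoids13_2 P) ↔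
      ∀ i : Fin n, rgf P i = if (i : ℕ) ≤ n - k then 1 else (i : ℕ) - (n - k) + 1) ∧
    Nat.card {P : SP n // P.parts.card = k ∧ avoids1_23 P ∧ avoids13_2 P} = 1 :=
  stmt7_general n k hk1 hkn
end

section
/- For n > k, the generating function for the lb statistic over k-block set partitions of [n] avoiding 1/23 equals 1 + q + q^2 + ⋯ + q^{k-1}; when n = k it equals 1. The same holds for the rs statistic. -/
open Finset Polynomial

/-!
Let `P` be a `k`-block partition of `[n]` avoiding `1/23`. If `k < n`, some block has at least two
elements; for its two largest `b < c`, avoidance forces every `a < b` into that block, and any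
other block with two elements `x < y` would give the pattern `b, x, y`. So the block is
`{1, …, l, m}` with `l = n - k < m`, and all other blocks are singletons. The RGF of such a
partition is `1` on the big block and strictly increasing elsewhere, so `lb` counts the letters
`> 1` to the left of the late `1` and `rs` counts the letters `> 1` with a `1` to their right:
both equal `m - l - 1`, which runs over `0, …, k - 1`. If `k = n` the only partition is the
discrete one, whose RGF is increasing.
-/

namespace Finpartition

variable {α : Type*} [DecidableEq α] {s : Finset α}

theorem eq_of_parts_subset {P Q : Finpartition s} (h : P.parts ⊆ Q.parts) : P = Q := by
  ext C
  refine ⟨fun hC => h hC, fun hC => ?_⟩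
  obtain ⟨a, ha⟩ := Q.nonempty_of_mem_parts hC
  obtain ⟨D, hD, haD⟩ := P.exists_mem (Q.le hC ha)
  rwa [Q.eq_of_mem_parts hC (h hD) ha haD]

theorem exists_one_lt_card_of_card_parts_lt (P : Finpartition s) (h : #P.parts < #s) :
    ∃ C ∈ P.parts, 1 < #C := by
  by_contra! hle
  have := P.sum_card_parts ▸ Finset.sum_le_card_nsmul P.parts card 1 hle
  rw [smul_eq_mul, mul_one] at this
  omega

theorem eq_bot_of_card_parts_eq (P : Finpartition s) (h : #P.parts = #s) : P = ⊥ := by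
  have hone : ∀ C ∈ P.parts, 1 = #C := by
    refine (Finset.sum_eq_sum_iff_of_le fun C hC => ?_).1 ?_
    · exact Finset.card_pos.2 (P.nonempty_of_mem_parts hC)
    · rw [P.sum_card_parts, Finset.sum_const, smul_eq_mul, mul_one, h]
  refine eq_of_parts_subset fun C hC => ?_
  obtain ⟨a, rfl⟩ := Finset.card_eq_one.1 (hone C hC).symm
  exact mem_bot_iff.2 ⟨a, P.le hC (mem_singleton_self a), rfl⟩

end Finpartition

section SetPartition

variable {n : ℕ}

/-- The partition of `Fin n` with the block `B` and singletons for all other elements. -/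
def withBlock (B : Finset (Fin n)) (hB : B.Nonempty) : SP n :=
  (⊥ : Finpartition Bᶜ).extend hB.ne_empty disjoint_compl_left compl_sup_eq_top

section withBlock

variable {B : Finset (Fin n)} (hB : B.Nonempty)

theorem mem_parts_withBlock {C : Finset (Fin n)} :
    C ∈ (withBlock B hB).parts ↔ C = B ∨ ∃ s ∉ B, C = {s} := by
  simp [withBlock, eq_comm]

theorem card_parts_withBlock : #(withBlock B hB).parts = #Bᶜ + 1 := by
  rw [withBlock, Finpartition.card_extend, Finpartition.card_bot]

theorem eq_withBlock {P : SP n} (hBP : B ∈ P.parts)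
    (hsingle : ∀ C ∈ P.parts, C ≠ B → #C = 1) : P = withBlock B hB := by
  refine Finpartition.eq_of_parts_subset fun C hC => (mem_parts_withBlock hB).2 ?_
  by_cases hCB : C = B
  · exact Or.inl hCB
  obtain ⟨s, rfl⟩ := Finset.card_eq_one.1 (hsingle C hC hCB)
  exact Or.inr ⟨s, fun hs => hCB (P.eq_of_mem_parts hC hBP (mem_singleton_self s) hs), rfl⟩

end withBlock

theorem blockOf_eq_of_mem {P : SP n} {B : Finset (Fin n)} (hB : B ∈ P.parts) {i : Fin n}
    (hi : i ∈ B) : blockOf P i = B := by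
  have : P.parts.filter (fun C => i ∈ C) = {B} :=
    Finset.eq_singleton_iff_unique_mem.2 ⟨Finset.mem_filter.2 ⟨hB, hi⟩,
      fun C hC => P.eq_of_mem_parts (Finset.mem_filter.1 hC).1 hB (Finset.mem_filter.1 hC).2 hi⟩
  rw [blockOf, this, Finset.sup_singleton, id]

theorem rgf_eq_of_mem {P : SP n} {B : Finset (Fin n)} (hB : B ∈ P.parts) {i : Fin n}
    (hi : i ∈ B) : rgf P i = #(P.parts.filter fun C => C.min ≤ B.min) := by
  rw [rgf, blockOf_eq_of_mem hB hi]

theorem monotone_rgf_bot : Monotone (rgf (⊥ : SP n)) := by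
  intro i j hij
  have hbot : ∀ s, ({s} : Finset (Fin n)) ∈ (⊥ : SP n).parts := fun s =>
    Finpartition.mem_bot_iff.2 ⟨s, Finset.mem_univ s, rfl⟩
  rw [rgf_eq_of_mem (hbot i) (mem_singleton_self i), rgf_eq_of_mem (hbot j) (mem_singleton_self j),
    Finset.min_singleton, Finset.min_singleton]
  exact Finset.card_le_card (Finset.monotone_filter_right _ fun C _ hC =>
    hC.trans (WithTop.coe_le_coe.2 hij))

/-- The restricted growth function of `withBlock B`, when the block `B` has the smallest minimum. -/
def blockWord (B : Finset (Fin n)) (i : Fin n) : ℕ :=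
  if i ∈ B then 1 else #(Bᶜ.filter (· ≤ i)) + 1

theorem rgf_withBlock {B : Finset (Fin n)} (hB : B.Nonempty)
    (hmin : ∀ s ∉ B, ∃ b ∈ B, b < s) :
    rgf (withBlock B hB) = blockWord B := by
  have hcount : ∀ x : WithTop (Fin n), #((withBlock B hB).parts.filter (·.min ≤ x)) =
      (if B.min ≤ x then 1 else 0) + #(Bᶜ.filter fun s : Fin n => (s : WithTop _) ≤ x) := by
    intro x
    have hBnot : B ∉ (Bᶜ.map ⟨singleton, singleton_injective⟩).filter (·.min ≤ x) := by
      simp only [Finset.mem_filter, Finset.mem_map, Function.Embedding.coeFn_mk, not_and]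
      rintro ⟨s, hs, rfl⟩
      exact absurd (mem_singleton_self s) (Finset.mem_compl.1 hs)
    rw [withBlock, Finpartition.extend_parts, Finpartition.parts_bot, Finset.filter_insert]
    split_ifs
    · rw [Finset.card_insert_of_notMem hBnot, add_comm, Finset.filter_map, Finset.card_map]
      rfl
    · rw [zero_add, Finset.filter_map, Finset.card_map]
      rfl
  have hBmin : ∀ s ∉ B, B.min < s := fun s hs => by
    obtain ⟨b, hb, hbs⟩ := hmin s hs
    exact (Finset.min_le hb).trans_lt (WithTop.coe_lt_coe.2 hbs)
  funext i
  by_cases hi : i ∈ B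
  · rw [rgf_eq_of_mem ((mem_parts_withBlock hB).2 (Or.inl rfl)) hi, hcount, if_pos le_rfl,
      blockWord, if_pos hi, add_eq_left, Finset.card_eq_zero, Finset.filter_eq_empty_iff]
    exact fun s hs => not_le.2 (hBmin s (Finset.mem_compl.1 hs))
  · rw [rgf_eq_of_mem ((mem_parts_withBlock hB).2 (Or.inr ⟨i, hi, rfl⟩))
        (mem_singleton_self i),
      Finset.min_singleton, hcount, if_pos (hBmin i hi).le, blockWord, if_neg hi, add_comm]
    simp only [WithTop.coe_le_coe]

section blockWord

variable {B : Finset (Fin n)} {i j : Fin n}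

theorem blockWord_of_mem (hi : i ∈ B) : blockWord B i = 1 := if_pos hi

theorem one_lt_blockWord_iff : 1 < blockWord B i ↔ i ∉ B := by
  unfold blockWord
  split_ifs with hi
  · simp [hi]
  · simp only [hi, not_false_eq_true, iff_true, Nat.lt_add_left_iff_pos, Finset.card_pos]
    exact ⟨i, Finset.mem_filter.2 ⟨Finset.mem_compl.2 hi, le_rfl⟩⟩

theorem one_le_blockWord : 1 ≤ blockWord B i := by
  unfold blockWord
  split_ifs <;> omega

theorem strictMonoOn_blockWord : StrictMonoOn (blockWord B) ↑Bᶜ := by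
  intro i hi j hj hij
  rw [Finset.mem_coe, Finset.mem_compl] at hi hj
  rw [blockWord, blockWord, if_neg hi, if_neg hj, add_lt_add_iff_right]
  refine Finset.card_lt_card ⟨Finset.monotone_filter_right _ fun _ _ h => h.trans hij.le, ?_⟩
  intro hsub
  have := (Finset.mem_filter.1 (hsub (Finset.mem_filter.2 ⟨Finset.mem_compl.2 hj, le_rfl⟩))).2
  exact absurd hij (not_lt.2 this)

theorem mem_of_blockWord_lt (hj : j ∉ B) (hji : j < i) (h : blockWord B i < blockWord B j) :
    i ∈ B := by
  by_contra hi
  exact (strictMonoOn_blockWord (Finset.mem_compl.2 hj) (Finset.mem_compl.2 hi) hji).not_gt h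

theorem blockWord_le_of_lt (hj : j ∉ B) (hij : i < j) : blockWord B i ≤ blockWord B j := by
  by_cases hi : i ∈ B
  · exact (blockWord_of_mem hi).trans_le one_le_blockWord
  · exact (strictMonoOn_blockWord (Finset.mem_compl.2 hi) (Finset.mem_compl.2 hj) hij).le

theorem lbStat_blockWord : lbStat (blockWord B) = ∑ j ∈ B, #(Bᶜ.filter (· < j)) := by
  rw [lbStat, ← Finset.sum_add_sum_compl B, add_eq_left.2]
  · refine Finset.sum_congr rfl fun j hj => ?_
    rw [blockWord_of_mem hj, Finset.filter_image, Finset.card_image_of_injOn]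
    · congr 1
      ext i
      simp [one_lt_blockWord_iff, and_comm]
    · exact strictMonoOn_blockWord.injOn.mono fun i hi => by
        simpa [one_lt_blockWord_iff] using (Finset.mem_filter.1 hi).2
  · refine Finset.sum_eq_zero fun j hj => ?_
    rw [Finset.card_eq_zero, Finset.filter_eq_empty_iff]
    simp only [Finset.mem_image, Finset.mem_filter, Finset.mem_univ, true_and]
    rintro _ ⟨i, hij, rfl⟩
    exact not_lt.2 (blockWord_le_of_lt (Finset.mem_compl.1 hj) hij)

theorem rsStat_blockWord : rsStat (blockWord B) = #(Bᶜ.filter fun j => ∃ i ∈ B, j < i) := by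
  rw [rsStat, ← Finset.sum_add_sum_compl B, Finset.card_filter, Finset.sum_eq_zero, zero_add]
  · refine Finset.sum_congr rfl fun j hj => ?_
    rw [Finset.mem_compl] at hj
    split_ifs with hex
    · obtain ⟨i, hi, hji⟩ := hex
      refine Finset.card_eq_one.2 ⟨1, Finset.eq_singleton_iff_unique_mem.2 ⟨?_, ?_⟩⟩
      · refine Finset.mem_filter.2 ⟨Finset.mem_image.2 ⟨i, by simpa using hji, ?_⟩, ?_⟩
        · exact blockWord_of_mem hi
        · exact one_lt_blockWord_iff.2 hj
      · simp only [Finset.mem_filter, Finset.mem_image, Finset.mem_univ, true_and]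
        rintro _ ⟨⟨i', hji', rfl⟩, hlt⟩
        exact blockWord_of_mem (mem_of_blockWord_lt hj hji' hlt)
    · rw [Finset.card_eq_zero, Finset.filter_eq_empty_iff]
      simp only [Finset.mem_image, Finset.mem_filter, Finset.mem_univ, true_and]
      rintro _ ⟨i, hji, rfl⟩ hlt
      exact hex ⟨i, mem_of_blockWord_lt hj hji hlt, hji⟩
  · intro j hj
    rw [Finset.card_eq_zero, Finset.filter_eq_empty_iff, blockWord_of_mem hj]
    simp only [Finset.mem_image]
    rintro _ ⟨i, -, rfl⟩
    exact not_lt.2 one_le_blockWord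

end blockWord

theorem lbStat_eq_zero_of_monotone {w : Fin n → ℕ} (hw : Monotone w) : lbStat w = 0 :=
  Finset.sum_eq_zero fun j _ => by
    rw [Finset.card_eq_zero, Finset.filter_eq_empty_iff]
    simp only [Finset.mem_image, Finset.mem_filter, Finset.mem_univ, true_and]
    rintro _ ⟨i, hij, rfl⟩
    exact not_lt.2 (hw hij.le)

theorem rsStat_eq_zero_of_monotone {w : Fin n → ℕ} (hw : Monotone w) : rsStat w = 0 :=
  Finset.sum_eq_zero fun j _ => by
    rw [Finset.card_eq_zero, Finset.filter_eq_empty_iff]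
    simp only [Finset.mem_image, Finset.mem_filter, Finset.mem_univ, true_and]
    rintro _ ⟨i, hji, rfl⟩
    exact not_lt.2 (hw hji.le)

/-- The block `{0, …, l - 1} ∪ {m}`; in the paper's notation `hookPartition l m` is the
partition whose RGF is `1^l 2 3 ⋯` with an extra `1` inserted at position `m + 1`. -/
def hookBlock (l : ℕ) (m : Fin n) : Finset (Fin n) :=
  insert m (univ.filter fun i => i.val < l)

def hookPartition (l : ℕ) (m : Fin n) : SP n :=
  withBlock (hookBlock l m) (insert_nonempty _ _)

section hook

variable {l : ℕ} {m i : Fin n}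

theorem mem_hookBlock : i ∈ hookBlock l m ↔ i = m ∨ i.val < l := by
  simp [hookBlock]

theorem rgf_hookPartition (hl : 0 < l) : rgf (hookPartition l m) = blockWord (hookBlock l m) :=
  rgf_withBlock _ fun s hs => ⟨⟨0, m.pos⟩, mem_hookBlock.2 (Or.inr hl), by
    rw [mem_hookBlock, not_or] at hs
    exact Fin.lt_def.2 (by simp only; omega)⟩

theorem card_filter_compl_hookBlock_lt (hm : l ≤ m.val) :
    #((hookBlock l m)ᶜ.filter (· < m)) = m.val - l := by
  have : (hookBlock l m)ᶜ.filter (· < m) = Finset.Ico ⟨l, by omega⟩ m := by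
    ext i
    simp only [Finset.mem_filter, Finset.mem_compl, mem_hookBlock, Finset.mem_Ico, not_or,
      Fin.le_def, Fin.lt_def]
    constructor
    · rintro ⟨⟨-, h⟩, him⟩
      omega
    · rintro ⟨h, him⟩
      exact ⟨⟨fun h' => by rw [h'] at him; omega, by omega⟩, him⟩
  rw [this, Fin.card_Ico]

theorem lbStat_blockWord_hookBlock (hm : l ≤ m.val) :
    lbStat (blockWord (hookBlock l m)) = m.val - l := by
  rw [lbStat_blockWord, Finset.sum_eq_single_of_mem m (mem_hookBlock.2 (Or.inl rfl)),
    card_filter_compl_hookBlock_lt hm]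
  intro j hj hjm
  rw [Finset.card_eq_zero, Finset.filter_eq_empty_iff]
  intro i hi
  rw [Finset.mem_compl, mem_hookBlock, not_or] at hi
  rw [mem_hookBlock] at hj
  rw [Fin.lt_def]
  omega

theorem rsStat_blockWord_hookBlock (hm : l ≤ m.val) :
    rsStat (blockWord (hookBlock l m)) = m.val - l := by
  rw [rsStat_blockWord, ← card_filter_compl_hookBlock_lt hm]
  congr 1
  refine Finset.filter_congr fun j hj =>
    ⟨?_, fun hjm => ⟨m, mem_hookBlock.2 (Or.inl rfl), hjm⟩⟩
  rintro ⟨i, hi, hji⟩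
  rw [Finset.mem_compl, mem_hookBlock, not_or] at hj
  rw [mem_hookBlock] at hi
  rcases hi with rfl | hi
  · exact hji
  · exact absurd (Fin.lt_def.1 hji) (by omega)

theorem card_parts_hookPartition (hm : l ≤ m.val) : #(hookPartition l m).parts = n - l := by
  have hlm : m ∉ univ.filter fun i : Fin n => i.val < l := by simp [hm]
  calc #(hookPartition l m).parts = #(hookBlock l m)ᶜ + 1 := card_parts_withBlock _
    _ = n - l := by
      rw [Finset.card_compl, Fintype.card_fin, hookBlock, Finset.card_insert_of_notMem hlm,
        Fin.card_filter_val_lt]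
      omega

theorem hookPartition_avoids1_23 (l : ℕ) (m : Fin n) : avoids1_23 (hookPartition l m) := by
  rintro ⟨a, b, c, hab, hbc, ⟨C, hC, hbC, hcC⟩, hnab⟩
  rcases (mem_parts_withBlock _).1 hC with rfl | ⟨s, -, rfl⟩
  · refine hnab ⟨hookBlock l m, hC, mem_hookBlock.2 (Or.inr ?_), hbC⟩
    rw [Fin.lt_def] at hab hbc
    rw [mem_hookBlock] at hbC hcC
    rcases hbC with rfl | hb <;> rcases hcC with rfl | hc <;> omega
  · rw [Finset.mem_singleton] at hbC hcC
    exact absurd hbc (by rw [hbC, hcC]; exact lt_irrefl s)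

end hook

section avoids1_23

variable {P : SP n} {B : Finset (Fin n)}

theorem mem_of_lt_of_avoids1_23 (hav : avoids1_23 P) (hB : B ∈ P.parts) {a b c : Fin n}
    (hb : b ∈ B) (hc : c ∈ B) (hab : a < b) (hbc : b < c) : a ∈ B := by
  by_contra ha
  exact hav ⟨a, b, c, hab, hbc, ⟨B, hB, hb, hc⟩, fun ⟨C, hC, haC, hbC⟩ =>
    ha (P.eq_of_mem_parts hC hB hbC hb ▸ haC)⟩

theorem card_eq_one_of_avoids1_23 (hav : avoids1_23 P) (hB : B ∈ P.parts) {b : Fin n}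
    (hb : b ∈ B) (hle : ∀ a ≤ b, a ∈ B) {C : Finset (Fin n)} (hC : C ∈ P.parts)
    (hCB : C ≠ B) : #C = 1 := by
  have hCne := P.nonempty_of_mem_parts hC
  by_contra h1
  have h1 : 1 < #C := by
    have := Finset.card_pos.2 hCne
    omega
  have hxB : C.min' hCne ∉ B := fun hx => hCB (P.eq_of_mem_parts hC hB (C.min'_mem hCne) hx)
  have hbx : b < C.min' hCne := not_le.1 fun h => hxB (hle _ h)
  exact hav ⟨b, C.min' hCne, C.max' hCne, hbx, C.min'_lt_max'_of_card h1,
    ⟨C, hC, C.min'_mem hCne, C.max'_mem hCne⟩, fun ⟨D, hD, hbD, hxD⟩ =>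
    hxB (P.eq_of_mem_parts hD hB hbD hb ▸ hxD)⟩

theorem exists_eq_hookPartition_of_avoids1_23 (hav : avoids1_23 P) (hlt : #P.parts < n) :
    ∃ l, ∃ m : Fin n, 0 < l ∧ l ≤ m.val ∧ P = hookPartition l m := by
  obtain ⟨B, hB, hB1⟩ :=
    P.exists_one_lt_card_of_card_parts_lt (by rwa [Finset.card_univ, Fintype.card_fin])
  have hBne : B.Nonempty := Finset.card_pos.1 (by omega)
  have hBne' : (B.erase (B.max' hBne)).Nonempty := by
    rw [← Finset.card_pos, Finset.card_erase_of_mem (B.max'_mem hBne)]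
    omega
  set c := B.max' hBne
  set b := (B.erase c).max' hBne'
  have hbB : b ∈ B := Finset.mem_of_mem_erase ((B.erase c).max'_mem hBne')
  have hbc : b < c :=
    (B.le_max' b hbB).lt_of_ne (Finset.ne_of_mem_erase ((B.erase c).max'_mem hBne'))
  have hBeq : B = hookBlock (b.val + 1) c := by
    ext x
    rw [mem_hookBlock, Nat.lt_succ_iff, ← Fin.le_def]
    constructor
    · intro hx
      by_cases hxc : x = c
      · exact Or.inl hxc
      · exact Or.inr ((B.erase c).le_max' x (Finset.mem_erase.2 ⟨hxc, hx⟩))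
    · rintro (rfl | hx)
      · exact B.max'_mem hBne
      · rcases hx.eq_or_lt with rfl | hx
        · exact hbB
        · exact mem_of_lt_of_avoids1_23 hav hB hbB (B.max'_mem hBne) hx hbc
  have hle : ∀ a ≤ b, a ∈ B := fun a ha =>
    hBeq ▸ mem_hookBlock.2 (Or.inr (Nat.lt_succ_of_le ha))
  refine ⟨b.val + 1, c, b.val.succ_pos, hbc, eq_withBlock _ (hBeq ▸ hB) fun C hC hCB => ?_⟩
  exact card_eq_one_of_avoids1_23 hav hB hbB hle hC (hBeq ▸ hCB)

theorem bot_avoids1_23 : avoids1_23 (⊥ : SP n) := by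
  rintro ⟨a, b, c, hab, hbc, ⟨C, hC, hbC, hcC⟩, -⟩
  obtain ⟨s, -, rfl⟩ := Finpartition.mem_bot_iff.1 hC
  rw [Finset.mem_singleton] at hbC hcC
  exact absurd hbc (by rw [hbC, hcC]; exact lt_irrefl s)

end avoids1_23

open Classical in
theorem filter_avoids1_23_of_lt {k : ℕ} (hk : k < n) :
    univ.filter (fun P : SP n => #P.parts = k ∧ avoids1_23 P) =
      univ.image fun j : Fin k => hookPartition (n - k) ⟨n - k + j, by omega⟩ := by
  ext P
  simp only [Finset.mem_filter, Finset.mem_univ, true_and, Finset.mem_image]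
  constructor
  · rintro ⟨hcard, hav⟩
    obtain ⟨l, m, -, hm, rfl⟩ := exists_eq_hookPartition_of_avoids1_23 hav (hcard ▸ hk)
    rw [card_parts_hookPartition hm] at hcard
    obtain rfl : l = n - k := by omega
    exact ⟨⟨m.val - (n - k), by omega⟩, congrArg _ (Fin.ext (by simp only; omega))⟩
  · rintro ⟨j, rfl⟩
    refine ⟨?_, hookPartition_avoids1_23 _ _⟩
    rw [card_parts_hookPartition (Nat.le_add_right _ _)]
    omega

theorem genPoly_avoids1_23_of_lt {k : ℕ} (hk : k < n) (stat : (Fin n → ℕ) → ℕ)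
    (hstat : ∀ m : Fin n, n - k ≤ m.val →
      stat (blockWord (hookBlock (n - k) m)) = m.val - (n - k)) :
    genPoly n k avoids1_23 stat = ∑ j ∈ Finset.range k, (X : Polynomial ℕ) ^ j := by
  have hstat' : ∀ j : Fin k, stat (rgf (hookPartition (n - k) ⟨n - k + j, by omega⟩)) = j :=
    fun j => by
      rw [rgf_hookPartition (by omega), hstat _ (Nat.le_add_right _ _)]
      simp only [add_tsub_cancel_left]
  rw [genPoly, filter_avoids1_23_of_lt hk, Finset.sum_image fun i _ j _ hij =>
    Fin.ext (by rw [← hstat' i, ← hstat' j, hij]), ← Fin.sum_univ_eq_sum_range]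
  exact Finset.sum_congr rfl fun j _ => by rw [hstat']

open Classical in
theorem filter_avoids1_23_self :
    univ.filter (fun P : SP n => #P.parts = n ∧ avoids1_23 P) = {⊥} := by
  ext P
  simp only [Finset.mem_filter, Finset.mem_univ, true_and, Finset.mem_singleton]
  constructor
  · rintro ⟨hcard, -⟩
    exact P.eq_bot_of_card_parts_eq (by rw [hcard, Finset.card_univ, Fintype.card_fin])
  · rintro rfl
    rw [Finpartition.card_bot, Finset.card_univ, Fintype.card_fin]
    exact ⟨rfl, bot_avoids1_23⟩

theorem genPoly_avoids1_23_self (stat : (Fin n → ℕ) → ℕ)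
    (hstat : stat (rgf (⊥ : SP n)) = 0) :
    genPoly n n avoids1_23 stat = 1 := by
  rw [genPoly, filter_avoids1_23_self, Finset.sum_singleton, hstat, pow_zero]

end SetPartition

/-- For `n > k`, the generating function for the `lb` statistic over
`k`-block partitions of `[n]` avoiding `1/23` equals `1 + q + ⋯ + q^{k-1}`; when `n = k`
it equals `1`. The same holds for the `rs` statistic. -/
theorem stmt11 (n k : ℕ) :
    (k < n →
      genPoly n k avoids1_23 lbStat = ∑ j ∈ Finset.range k, (X : Polynomial ℕ) ^ j ∧
      genPoly n k avoids1_23 rsStat = ∑ j ∈ Finset.range k, (X : Polynomial ℕ) ^ j) ∧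
    (k = n →
      genPoly n k avoids1_23 lbStat = 1 ∧ genPoly n k avoids1_23 rsStat = 1) := by
  refine ⟨fun hk => ⟨?_, ?_⟩, ?_⟩
  · exact genPoly_avoids1_23_of_lt hk lbStat fun m hm => lbStat_blockWord_hookBlock hm
  · exact genPoly_avoids1_23_of_lt hk rsStat fun m hm => rsStat_blockWord_hookBlock hm
  · rintro rfl
    exact ⟨genPoly_avoids1_23_self lbStat (lbStat_eq_zero_of_monotone monotone_rgf_bot),
      genPoly_avoids1_23_self rsStat (rsStat_eq_zero_of_monotone monotone_rgf_bot)⟩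
end
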